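/- arXiv:2401.11340 — 2 statements merged into one kernel-verified Lean document; each statement's English description precedes it below -/
import Mathlib

section
/- The Sharma–Mittal-type composition law Φ(x,y) = e^{L[(x+1)ln(x+1) + (y+1)ln(y+1)]} − 1 is symmetric, associative, and satisfies Φ(x,0) = x, for x, y ≥ 0, where L is the principal branch of the Lambert W function. -/
open Real

/-! Φ is addition transported along g(a) = (a + 1) log (a + 1): since L(t) e^{L(t)} = t, the map
t ↦ e^{L(t)} − 1 is a right inverse of g on [0, ∞), so Φ(x, y) = g⁻¹(g x + g y) there, and
symmetry and associativity are inherited from addition. The unit law is the identity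
L(u ln u) = ln u at u = x + 1. -/

noncomputable def lambertLaw (L : ℝ → ℝ) (a b : ℝ) : ℝ :=
  exp (L ((a + 1) * log (a + 1) + (b + 1) * log (b + 1))) - 1

lemma add_one_mul_log_add_one_nonneg {a : ℝ} (ha : 0 ≤ a) : 0 ≤ (a + 1) * log (a + 1) :=
  mul_nonneg (by linarith) (log_nonneg (by linarith))

lemma exp_sub_one_add_one_mul_log (w : ℝ) :
    (exp w - 1 + 1) * log (exp w - 1 + 1) = w * exp w := by
  rw [sub_add_cancel, log_exp, mul_comm]

section

variable {L : ℝ → ℝ}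

lemma lambertLaw_comm (a b : ℝ) : lambertLaw L a b = lambertLaw L b a := by
  rw [lambertLaw, lambertLaw, add_comm]

lemma add_one_mul_log_add_one_lambertLaw (hL : ∀ t, 0 ≤ t → L t * exp (L t) = t)
    {a b : ℝ} (ha : 0 ≤ a) (hb : 0 ≤ b) :
    (lambertLaw L a b + 1) * log (lambertLaw L a b + 1)
      = (a + 1) * log (a + 1) + (b + 1) * log (b + 1) := by
  rw [lambertLaw, exp_sub_one_add_one_mul_log, hL _ (add_nonneg
    (add_one_mul_log_add_one_nonneg ha) (add_one_mul_log_add_one_nonneg hb))]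

lemma lambertLaw_assoc (hL : ∀ t, 0 ≤ t → L t * exp (L t) = t)
    {a b c : ℝ} (ha : 0 ≤ a) (hb : 0 ≤ b) (hc : 0 ≤ c) :
    lambertLaw L a (lambertLaw L b c) = lambertLaw L (lambertLaw L a b) c := by
  rw [lambertLaw, add_one_mul_log_add_one_lambertLaw hL hb hc, lambertLaw,
    add_one_mul_log_add_one_lambertLaw hL ha hb, add_assoc]

lemma lambertLaw_zero_right (hLid : ∀ u, 1 ≤ u → L (u * log u) = log u)
    {a : ℝ} (ha : 0 ≤ a) : lambertLaw L a 0 = a := by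
  rw [lambertLaw, zero_add, log_one, mul_zero, add_zero, hLid _ (by linarith),
    exp_log (by linarith), add_sub_cancel_right]

end

/-- The composition law Φ(x,y) = exp(L[(x+1)ln(x+1) + (y+1)ln(y+1)]) − 1
    is symmetric, associative, and satisfies Φ(x,0) = x for x, y ≥ 0, where
    L is the principal branch of the Lambert W function. -/
theorem factorial_class_group_law (L : ℝ → ℝ)
    (hL : ∀ t : ℝ, -Real.exp (-1) ≤ t → L t * Real.exp (L t) = t ∧ -1 ≤ L t)
    (hLid : ∀ u : ℝ, 1 ≤ u → L (u * Real.log u) = Real.log u) :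
    (∀ x y : ℝ, 0 ≤ x → 0 ≤ y →
      Real.exp (L ((x + 1) * Real.log (x + 1) + (y + 1) * Real.log (y + 1))) - 1
        = Real.exp (L ((y + 1) * Real.log (y + 1) + (x + 1) * Real.log (x + 1))) - 1) ∧
    (∀ x y z : ℝ, 0 ≤ x → 0 ≤ y → 0 ≤ z →
      (let Φ : ℝ → ℝ → ℝ := fun a b =>
        Real.exp (L ((a + 1) * Real.log (a + 1) + (b + 1) * Real.log (b + 1))) - 1
       Φ x (Φ y z) = Φ (Φ x y) z)) ∧
    (∀ x : ℝ, 0 ≤ x →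
      Real.exp (L ((x + 1) * Real.log (x + 1) + (0 + 1) * Real.log (0 + 1))) - 1 = x) := by
  have hL_inv : ∀ t, 0 ≤ t → L t * exp (L t) = t := fun t ht =>
    (hL t (le_trans (neg_nonpos.mpr (exp_pos _).le) ht)).1
  exact ⟨fun x y _ _ => lambertLaw_comm x y,
    fun _ _ _ hx hy hz => lambertLaw_assoc hL_inv hx hy hz,
    fun _ hx => lambertLaw_zero_right hLid hx⟩
end

section
/- For the full-range logistic map f(x) = 4x(1−x) on [0,1], the ordinal 3-pattern (2,1,0) is forbidden: there is no x ∈ [0,1] with f(f(x)) < f(x) < x. -/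
/-!
For `y ≥ 0`, `f y < y` holds exactly when `y` lies beyond the fixed point `3/4`, and `f` maps
that region below `3/4`; so the orbit cannot decrease twice in a row.
-/

open Set

def logistic (x : ℝ) : ℝ := 4 * x * (1 - x)

lemma logistic_nonneg {x : ℝ} (hx₀ : 0 ≤ x) (hx₁ : x ≤ 1) : 0 ≤ logistic x :=
  mul_nonneg (by positivity) (sub_nonneg.2 hx₁)

lemma logistic_lt_self_iff {x : ℝ} (hx : 0 ≤ x) : logistic x < x ↔ 3 / 4 < x := by
  unfold logistic
  constructor <;> intro h <;> nlinarith

lemma logistic_lt_three_quarters {x : ℝ} (hx : 3 / 4 < x) : logistic x < 3 / 4 := by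
  have key : 3 / 4 - logistic x = 4 * (x - 1 / 4) * (x - 3 / 4) := by
    unfold logistic
    ring
  have : 0 < 4 * (x - 1 / 4) * (x - 3 / 4) := by
    apply mul_pos <;> linarith
  linarith

/-- The ordinal 3-pattern (2,1,0) is forbidden for the full-range logistic map
    f(x) = 4x(1−x): no x ∈ [0,1] satisfies f(f(x)) < f(x) < x. -/
theorem logistic_forbidden_pattern_210 :
    ∀ x ∈ Icc (0:ℝ) 1,
      ¬ (4 * (4 * x * (1 - x)) * (1 - 4 * x * (1 - x)) < 4 * x * (1 - x)
          ∧ 4 * x * (1 - x) < x) := by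
  rintro x ⟨hx₀, hx₁⟩ ⟨hffx, hfx⟩
  have hx_gt : 3 / 4 < x := (logistic_lt_self_iff hx₀).1 hfx
  have hfx_gt : 3 / 4 < logistic x := (logistic_lt_self_iff (logistic_nonneg hx₀ hx₁)).1 hffx
  exact (logistic_lt_three_quarters hx_gt).not_gt hfx_gt
end
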